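/- Local quadratic expansion of the expected check loss: let ε be a real-valued random variable with distribution function F(s) = P(ε ≤ s) satisfying F(0) = τ, P(ε < 0) = τ, and suppose F is differentiable at 0 with F′(0) = f₀. Then E[ρ_τ(ε − t) − ρ_τ(ε)] = (f₀/2)·t² + o(t²) as t → 0; that is, the map t ↦ E[ρ_τ(ε − t) − ρ_τ(ε)] − (f₀/2)t² is o(t²) at t = 0. -/

import Mathlib

open MeasureTheory Asymptotics

/-- The quantile check loss `ρ_τ(u) = u (τ − 𝟙{u<0})`. -/
noncomputable def check (τ u : ℝ) : ℝ := u * (τ - if u < 0 then 1 else 0)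

lemma check_eq (τ v : ℝ) : check τ v = τ * v + max (-v) 0 := by
  unfold check
  by_cases h : v < 0
  · simp [h, max_eq_left (by linarith : (0:ℝ) ≤ -v)]; ring
  · simp [h, max_eq_right (by linarith [not_lt.mp h] : -v ≤ (0:ℝ))]; ring

lemma key_pointwise (τ u t : ℝ) :
    check τ (u - t) - check τ u = -(τ * t) + (max (t - u) 0 - max (-u) 0) := by
  rw [check_eq, check_eq]
  have : -(u - t) = t - u := by ring
  rw [this]; ring

lemma indic_vol (u a b : ℝ) (hab : a ≤ b) :
    ((volume.restrict (Set.Ioc a b)) (Set.Ici u)).toReal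
      = max (b - u) 0 - max (a - u) 0 := by
  rw [Measure.restrict_apply measurableSet_Ici]
  rcases le_or_gt u a with hu | hu
  · have : Set.Ici u ∩ Set.Ioc a b = Set.Ioc a b := by
      apply Set.inter_eq_self_of_subset_right
      intro s hs; exact le_trans hu (le_of_lt hs.1)
    rw [this]
    rw [Real.volume_Ioc, ENNReal.toReal_ofReal (by linarith),
      max_eq_left (by linarith : (0:ℝ) ≤ b - u),
      max_eq_left (by linarith : (0:ℝ) ≤ a - u)]
    ring
  · have : Set.Ici u ∩ Set.Ioc a b = Set.Icc u b := by
      ext s; simp only [Set.mem_inter_iff, Set.mem_Ici, Set.mem_Ioc, Set.mem_Icc]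
      constructor
      · rintro ⟨h1, _, h3⟩; exact ⟨h1, h3⟩
      · rintro ⟨h1, h2⟩; exact ⟨h1, lt_of_lt_of_le hu h1, h2⟩
    rw [this, Real.volume_Icc, max_eq_right (by linarith : a - u ≤ (0:ℝ)), sub_zero]
    exact rfl

lemma indic_int (u t : ℝ) :
    (∫ s in (0:ℝ)..t, (if u ≤ s then (1:ℝ) else 0)) = max (t - u) 0 - max (-u) 0 := by
  have hind : (fun s => if u ≤ s then (1:ℝ) else 0)
      = Set.indicator (Set.Ici u) (fun _ => (1:ℝ)) := by
    funext s; simp [Set.indicator_apply]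
  have key : ∀ a b : ℝ, a ≤ b →
      (∫ s in Set.Ioc a b, (if u ≤ s then (1:ℝ) else 0))
        = max (b - u) 0 - max (a - u) 0 := by
    intro a b hab
    rw [show (fun s => if u ≤ s then (1:ℝ) else 0)
        = Set.indicator (Set.Ici u) (fun _ => (1:ℝ)) from hind]
    rw [MeasureTheory.integral_indicator measurableSet_Ici,
      MeasureTheory.setIntegral_const, smul_eq_mul, mul_one]
    exact indic_vol u a b hab
  rcases le_total 0 t with h | h
  · rw [intervalIntegral.integral_of_le h, key 0 t h]
    norm_num
  · rw [intervalIntegral.integral_of_ge h, key t 0 h]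
    have : max (0 - u) 0 = max (-u) 0 := by norm_num
    rw [this]; ring

lemma swap_step {Ω : Type*} [MeasurableSpace Ω] (μ : Measure Ω)
    [IsProbabilityMeasure μ] (ε : Ω → ℝ) (hε : Measurable ε)
    (F : ℝ → ℝ) (hF : ∀ s, F s = (μ {ω | ε ω ≤ s}).toReal) (a b : ℝ) :
    ∫ ω, (∫ s in Set.Ioc a b, (if ε ω ≤ s then (1:ℝ) else 0)) ∂μ
      = ∫ s in Set.Ioc a b, F s := by
  haveI : IsFiniteMeasure (volume.restrict (Set.Ioc a b)) :=
    ⟨by rw [Measure.restrict_apply_univ]; exact measure_Ioc_lt_top⟩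
  have hmeas : Measurable (fun p : Ω × ℝ => if ε p.1 ≤ p.2 then (1:ℝ) else 0) := by
    apply Measurable.ite _ measurable_const measurable_const
    exact measurableSet_le (hε.comp measurable_fst) measurable_snd
  have hint : Integrable (fun p : Ω × ℝ => if ε p.1 ≤ p.2 then (1:ℝ) else 0)
      (μ.prod (volume.restrict (Set.Ioc a b))) := by
    apply (integrable_const (1:ℝ)).mono' (hmeas.aestronglyMeasurable)
    filter_upwards with p
    split <;> simp
  rw [MeasureTheory.integral_integral_swap hint]
  apply setIntegral_congr_fun measurableSet_Ioc
  intro s _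
  show (∫ ω, (if ε ω ≤ s then (1:ℝ) else 0) ∂μ) = F s
  have : (fun ω => if ε ω ≤ s then (1:ℝ) else 0)
      = Set.indicator {ω | ε ω ≤ s} (fun _ => (1:ℝ)) := by
    funext ω; simp [Set.indicator_apply, Set.mem_setOf_eq]
  rw [this, MeasureTheory.integral_indicator (measurableSet_le hε measurable_const),
    MeasureTheory.setIntegral_const, smul_eq_mul, mul_one, hF]
  rfl

lemma fubini_step {Ω : Type*} [MeasurableSpace Ω] (μ : Measure Ω)
    [IsProbabilityMeasure μ] (ε : Ω → ℝ) (hε : Measurable ε)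
    (F : ℝ → ℝ) (hF : ∀ s, F s = (μ {ω | ε ω ≤ s}).toReal) (t : ℝ) :
    ∫ ω, (max (t - ε ω) 0 - max (-(ε ω)) 0) ∂μ = ∫ s in (0:ℝ)..t, F s := by
  have h1 : ∀ ω, max (t - ε ω) 0 - max (-(ε ω)) 0
      = ∫ s in (0:ℝ)..t, (if ε ω ≤ s then (1:ℝ) else 0) :=
    fun ω => (indic_int (ε ω) t).symm
  rcases le_total 0 t with h | h
  · rw [intervalIntegral.integral_of_le h, ← swap_step μ ε hε F hF 0 t]
    congr 1; funext ω
    rw [h1 ω, intervalIntegral.integral_of_le h]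
  · rw [intervalIntegral.integral_of_ge h]
    rw [← swap_step μ ε hε F hF t 0]
    rw [← MeasureTheory.integral_neg]
    congr 1; funext ω
    rw [h1 ω, intervalIntegral.integral_of_ge h]

/-- Local quadratic expansion of the expected check loss:
`E[ρ_τ(ε − t) − ρ_τ(ε)] = (f₀/2) t² + o(t²)` as `t → 0`. -/
theorem local_quadratic_expansion {Ω : Type*} [MeasurableSpace Ω] (μ : Measure Ω)
    [IsProbabilityMeasure μ] (ε : Ω → ℝ) (hε : Measurable ε)
    (τ f₀ : ℝ) (hτ : τ ∈ Set.Ioo (0 : ℝ) 1)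
    (F : ℝ → ℝ) (hF : ∀ s, F s = (μ {ω | ε ω ≤ s}).toReal)
    (hF0 : F 0 = τ) (hlt : (μ {ω | ε ω < 0}).toReal = τ)
    (hderiv : HasDerivAt F f₀ 0) :
    (fun t => (∫ ω, (check τ (ε ω - t) - check τ (ε ω)) ∂μ) - (f₀ / 2) * t ^ 2)
      =o[nhds (0 : ℝ)] (fun t => t ^ 2) := by
  -- integrability of the bounded part
  have hbnd : ∀ t : ℝ, Integrable (fun ω => max (t - ε ω) 0 - max (-(ε ω)) 0) μ := by
    intro t
    have hm : Measurable (fun ω => max (t - ε ω) 0 - max (-(ε ω)) 0) :=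
      ((measurable_const.sub hε).max measurable_const).sub (hε.neg.max measurable_const)
    apply (integrable_const |t|).mono' hm.aestronglyMeasurable
    filter_upwards with ω
    have := abs_max_sub_max_le_abs (t - ε ω) (-(ε ω)) 0
    simpa [Real.norm_eq_abs] using this
  -- exact formula for the expected loss difference
  have hG : ∀ t : ℝ, (∫ ω, (check τ (ε ω - t) - check τ (ε ω)) ∂μ)
      = -(τ * t) + ∫ s in (0:ℝ)..t, F s := by
    intro t
    have heq : (fun ω => check τ (ε ω - t) - check τ (ε ω))
        = fun ω => -(τ * t) + (max (t - ε ω) 0 - max (-(ε ω)) 0) := by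
      funext ω; exact key_pointwise τ (ε ω) t
    rw [heq, integral_add (integrable_const _) (hbnd t), integral_const,
      fubini_step μ ε hε F hF t]
    simp
  -- F is monotone, hence interval integrable
  have hmono : Monotone F := by
    intro a b hab
    rw [hF, hF]
    exact ENNReal.toReal_mono (measure_ne_top μ _)
      (measure_mono (fun ω h => le_trans h hab))
  have hFint : ∀ a b : ℝ, IntervalIntegrable F volume a b :=
    fun a b => hmono.intervalIntegrable
  -- remainder as interval integral
  have hrem : ∀ t : ℝ, (∫ ω, (check τ (ε ω - t) - check τ (ε ω)) ∂μ) - (f₀ / 2) * t ^ 2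
      = ∫ s in (0:ℝ)..t, (F s - (τ + f₀ * s)) := by
    intro t
    rw [hG t, intervalIntegral.integral_sub (hFint 0 t)
      ((by continuity : Continuous fun s : ℝ => τ + f₀ * s).intervalIntegrable 0 t)]
    have : (∫ s in (0:ℝ)..t, (τ + f₀ * s))
        = τ * t + f₀ / 2 * t ^ 2 := by
      rw [intervalIntegral.integral_add intervalIntegrable_const
        ((by continuity : Continuous fun s : ℝ => f₀ * s).intervalIntegrable 0 t),
        intervalIntegral.integral_const, intervalIntegral.integral_const_mul,
        integral_id]
      simp; ring
    rw [this]; ring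
  -- the little-o estimate
  rw [Asymptotics.isLittleO_iff]
  intro c hc
  have hlo := (hasDerivAt_iff_isLittleO.mp hderiv)
  have hev := Asymptotics.isLittleO_iff.mp hlo hc
  rw [Metric.eventually_nhds_iff] at hev
  obtain ⟨δ, hδ, hball⟩ := hev
  filter_upwards [Metric.ball_mem_nhds (0:ℝ) hδ] with t ht
  rw [hrem t]
  have htδ : |t| < δ := by simpa [Real.dist_eq] using ht
  have habs : ∀ x ∈ Set.uIoc (0:ℝ) t, ‖F x - (τ + f₀ * x)‖ ≤ c * |t| := by
    intro x hx
    have hx1 : |x| ≤ |t| := by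
      rcases Set.mem_uIoc.mp hx with ⟨h1, h2⟩ | ⟨h1, h2⟩
      · rw [abs_of_pos h1]; exact le_trans h2 (le_abs_self t)
      · rw [abs_of_nonpos h2]
        calc -x ≤ -t := by linarith
        _ ≤ |t| := neg_le_abs t
    have hx2 : dist x 0 < δ := by rw [Real.dist_eq, sub_zero]; exact lt_of_le_of_lt hx1 htδ
    have := hball hx2
    simp only [sub_zero, smul_eq_mul, Real.norm_eq_abs, hF0] at this
    have heq : F x - (τ + f₀ * x) = F x - τ - x * f₀ := by ring
    rw [Real.norm_eq_abs, heq]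
    calc |F x - τ - x * f₀| ≤ c * |x| := this
    _ ≤ c * |t| := by exact mul_le_mul_of_nonneg_left hx1 (le_of_lt hc)
  calc ‖∫ s in (0:ℝ)..t, (F s - (τ + f₀ * s))‖ ≤ c * |t| * |t - 0| :=
        intervalIntegral.norm_integral_le_of_norm_le_const habs
  _ = c * ‖t ^ 2‖ := by
      rw [sub_zero, Real.norm_eq_abs]
      rw [show |t ^ 2| = |t| * |t| by rw [← abs_mul]; ring_nf]
      ring
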